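/- Let (r+1,c) be an E-target of D ∈ MBPD(n) with window [r,r+1]×[c',c]. (1) If the E-target is in Case L, then the RJ subsequence of D_{r,[c'+1,c-1]} is of type J or of type JR. (2) Suppose the E-target is not in Case L, and let S' = D_{r+1,[c'+1,c-1]}. Then the E-target is in Case D if and only if the RJ subsequence of S' is of type J or of type JR; and in Case D, D_{[r,r+1],[c',λ]} is a doublecross, where λ is the left droop column. -/
import Mathlib


namespace BPD

/-- The seven tiles of a marked bumpless pipedream:
blank, horizontal, vertical, plus, R, J, marked J. -/
inductive Tile
  | blank | horiz | vert | plus | rtile | jtile | mjtile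
  deriving DecidableEq

/-- Does the tile contain a pipe end on its left edge? -/
def Tile.left : Tile → Bool
  | .horiz | .plus | .jtile | .mjtile => true
  | _ => false

/-- Does the tile contain a pipe end on its right edge? -/
def Tile.right : Tile → Bool
  | .horiz | .plus | .rtile => true
  | _ => false

/-- Does the tile contain a pipe end on its top edge? -/
def Tile.up : Tile → Bool
  | .vert | .plus | .jtile | .mjtile => true
  | _ => false

/-- Does the tile contain a pipe end on its bottom edge? -/
def Tile.down : Tile → Bool
  | .vert | .plus | .rtile => true
  | _ => false

/-- A tile is heavy if it is a blank or a marked J; light otherwise. -/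
def Tile.Heavy (t : Tile) : Prop := t = Tile.blank ∨ t = Tile.mjtile

instance : DecidablePred Tile.Heavy := fun t =>
  decidable_of_iff (t = Tile.blank ∨ t = Tile.mjtile) Iff.rfl

/-- Tile matrices, with the meaningful rows/columns indexed by `1, …, n`. -/
abbrev Grid := ℕ → ℕ → Tile

/-- A valid marked bumpless pipedream of size `n`: pipe ends of adjacent tiles
match, a pipe enters every row from the right boundary, a pipe leaves every
column through the bottom boundary, no pipe meets the top or left boundary,
and (as a normalization making an `n × n` matrix) all entries outside the
board are `blank`. -/
def IsMBPD (n : ℕ) (D : Grid) : Prop :=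
  (∀ i j, 1 ≤ i → i ≤ n → 1 ≤ j → j + 1 ≤ n → (D i j).right = (D i (j+1)).left) ∧
  (∀ i j, 1 ≤ i → i + 1 ≤ n → 1 ≤ j → j ≤ n → (D i j).down = (D (i+1) j).up) ∧
  (∀ i, 1 ≤ i → i ≤ n → (D i n).right = true) ∧
  (∀ j, 1 ≤ j → j ≤ n → (D n j).down = true) ∧
  (∀ j, 1 ≤ j → j ≤ n → (D 1 j).up = false) ∧
  (∀ i, 1 ≤ i → i ≤ n → (D i 1).left = false) ∧
  (∀ i j, ¬ (1 ≤ i ∧ i ≤ n ∧ 1 ≤ j ∧ j ≤ n) → D i j = Tile.blank)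

/-- `D_{r,[b,c]}` is a pipe segment: every strictly interior tile is
horizontal or plus. -/
def PipeSegment (D : Grid) (r b c : ℕ) : Prop :=
  ∀ j < c, b < j → (D r j = Tile.horiz ∨ D r j = Tile.plus)

instance (D : Grid) (r b c : ℕ) : Decidable (PipeSegment D r b c) :=
  inferInstanceAs (Decidable (∀ j < c, b < j → (D r j = Tile.horiz ∨ D r j = Tile.plus)))

/-- `D_{[r,r+1],[b,d]}` is a doublecross. -/
def Doublecross (D : Grid) (r b d : ℕ) : Prop :=
  b < d ∧ PipeSegment D r b d ∧ PipeSegment D (r+1) b d ∧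
    D r b = Tile.rtile ∧ D (r+1) d = Tile.jtile

/-- The RJ subsequence of the tiles of row `r` in columns `a, …, b-1`. -/
def rjWord (D : Grid) (r a b : ℕ) : List Tile :=
  ((List.Ico a b).map (D r)).filter (fun t => decide (t = Tile.rtile ∨ t = Tile.jtile))

/-- A paired RJ word: zero or more consecutive pairs (an R then a J). -/
inductive Paired : List Tile → Prop
  | nil : Paired []
  | cons {w : List Tile} : Paired w → Paired (Tile.rtile :: Tile.jtile :: w)

/-- A single J followed by a paired word. -/
def TypeJ (w : List Tile) : Prop := ∃ w', Paired w' ∧ w = Tile.jtile :: w'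

/-- A paired word followed by a single R. -/
def TypeR (w : List Tile) : Prop := ∃ w', Paired w' ∧ w = w' ++ [Tile.rtile]

/-- A single J, then a paired word, then a single R. -/
def TypeJR (w : List Tile) : Prop :=
  ∃ w', Paired w' ∧ w = Tile.jtile :: (w' ++ [Tile.rtile])

/-- `D` admits the `(r,[b,d])`-droop. -/
def AdmitsDroop (D : Grid) (r b d : ℕ) : Prop :=
  b < d ∧
  (∀ j, b ≤ j → j ≤ d → ¬ (D r j).Heavy) ∧
  (∀ j, b ≤ j → j < d → ¬ (D (r+1) j).Heavy) ∧
  D (r+1) d ≠ Tile.mjtile ∧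
  PipeSegment D r b d ∧
  Paired (rjWord D (r+1) (b+1) d) ∧
  D r b ≠ Tile.horiz ∧ D r d ≠ Tile.plus

/-- `D` admits the `(r,[b,d])`-undroop. -/
def AdmitsUndroop (D : Grid) (r b d : ℕ) : Prop :=
  b < d ∧
  (∀ j, b ≤ j → j ≤ d → ¬ (D (r+1) j).Heavy) ∧
  (∀ j, b < j → j ≤ d → ¬ (D r j).Heavy) ∧
  D r b ≠ Tile.mjtile ∧
  PipeSegment D (r+1) b d ∧
  Paired (rjWord D r (b+1) d) ∧
  D (r+1) d ≠ Tile.horiz ∧ D (r+1) b ≠ Tile.plus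

/-- The (unmarked) tile with the given pipe ends on its
left/right/top/bottom edges (junk value `blank` for impossible combinations). -/
def mkTile : Bool → Bool → Bool → Bool → Tile
  | false, false, false, false => Tile.blank
  | true,  true,  false, false => Tile.horiz
  | false, false, true,  true  => Tile.vert
  | true,  true,  true,  true  => Tile.plus
  | false, true,  false, true  => Tile.rtile
  | true,  false, true,  false => Tile.jtile
  | _, _, _, _ => Tile.blank

/-- The `(r,[b,d])`-droop: the pipe segment of row `r` in columns `b, …, d`
drops to row `r+1`, kinks of row `r+1` strictly between columns `b` and `d`
move up to row `r`, vertical pipes are unchanged, and the corners transform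
as `R → blank` or `plus → J` at `(r,b)` and `blank → J` or `R → plus` at
`(r+1,d)`. -/
def droop (D : Grid) (r b d : ℕ) : Grid := fun i j =>
  if i = r ∧ j = b then mkTile (D r b).left false (D r b).up false
  else if i = r ∧ j = d then mkTile false (D r d).right (D r d).up true
  else if i = r + 1 ∧ j = b then mkTile (D (r+1) b).left true false (D (r+1) b).down
  else if i = r + 1 ∧ j = d then mkTile true (D (r+1) d).right true (D (r+1) d).down
  else if i = r ∧ b < j ∧ j < d then
    mkTile (D (r+1) j).left (D (r+1) j).right (D r j).up (D (r+1) j).down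
  else if i = r + 1 ∧ b < j ∧ j < d then
    mkTile (D r j).left (D r j).right (D (r+1) j).down (D (r+1) j).down
  else D i j

/-- The `(r,[b,d])`-undroop, inverse to the `(r,[b,d])`-droop: the pipe
segment of row `r+1` in columns `b, …, d` moves up to row `r`, kinks of row
`r` move down to row `r+1`, vertical pipes are unchanged, and the corners
transform as `blank → R` or `J → plus` at `(r,b)` and `J → blank` or
`plus → R` at `(r+1,d)`. -/
def undroop (D : Grid) (r b d : ℕ) : Grid := fun i j =>
  if i = r ∧ j = b then mkTile (D r b).left true (D r b).up true
  else if i = r ∧ j = d then mkTile true (D r d).right (D r d).up false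
  else if i = r + 1 ∧ j = b then mkTile (D (r+1) b).left false true (D (r+1) b).down
  else if i = r + 1 ∧ j = d then mkTile false (D (r+1) d).right false (D (r+1) d).down
  else if i = r ∧ b < j ∧ j < d then
    mkTile (D (r+1) j).left (D (r+1) j).right (D r j).up (D r j).up
  else if i = r + 1 ∧ b < j ∧ j < d then
    mkTile (D r j).left (D r j).right (D r j).up (D (r+1) j).down
  else D i j

/-- Remove the mark at `(r,c)` (if the tile there is a marked J). -/
def unmark (D : Grid) (r c : ℕ) : Grid := fun i j =>
  if i = r ∧ j = c ∧ D r c = Tile.mjtile then Tile.jtile else D i j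

/-- Mark the tile at `(r,c)` if it is a J tile. -/
def markIfJ (D : Grid) (r c : ℕ) : Grid := fun i j =>
  if i = r ∧ j = c ∧ D r c = Tile.jtile then Tile.mjtile else D i j

/-- `(r,c)` is an f-target of `D` with associated column `c'` (conditions
(f1), (f2) with `c'` minimal, (f3)). -/
def IsfTarget (n : ℕ) (D : Grid) (r c c' : ℕ) : Prop :=
  1 ≤ r ∧ r + 1 ≤ n ∧ 1 ≤ c ∧ c ≤ n ∧
  (D r c).Heavy ∧ (∀ j, c < j → j ≤ n → ¬ (D r j).Heavy) ∧
  c < c' ∧ c' ≤ n ∧ D (r+1) c' = Tile.jtile ∧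
  (∀ j, c < j → j < c' → D (r+1) j ≠ Tile.jtile) ∧
  (∀ j, 1 ≤ j → j < c' → ¬ (D (r+1) j).Heavy)

/-- `(r,c)` is an f*-target of `D` with associated column `c'` (conditions
(f1), (f*2) with `c'` the largest column carrying an R tile in row `r`, (f3)). -/
def IsfStarTarget (n : ℕ) (D : Grid) (r c c' : ℕ) : Prop :=
  1 ≤ r ∧ r + 1 ≤ n ∧ 1 ≤ c ∧ c ≤ n ∧
  (D r c).Heavy ∧ (∀ j, c < j → j ≤ n → ¬ (D r j).Heavy) ∧
  (∀ j, c < j → j ≤ n → D (r+1) j ≠ Tile.jtile ∧ D (r+1) j ≠ Tile.mjtile) ∧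
  1 ≤ c' ∧ c' ≤ n ∧ D r c' = Tile.rtile ∧
  (∀ j, c' < j → j ≤ n → D r j ≠ Tile.rtile) ∧
  (∀ j, 1 ≤ j → j < c' → ¬ (D (r+1) j).Heavy)

/-- An F-target is an f-target or an f*-target. -/
def IsFTarget (n : ℕ) (D : Grid) (r c c' : ℕ) : Prop :=
  IsfTarget n D r c c' ∨ IsfStarTarget n D r c c'

/-- Case B (blank) for an F-target. -/
def FCaseB (D : Grid) (r c : ℕ) : Prop := D r c = Tile.blank

/-- `b` is the left column of the window of the F-target `(r,c)`. -/
def FWindowLeft (D : Grid) (r c b : ℕ) : Prop :=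
  (D r c = Tile.blank ∧ b = c) ∨
  (D r c = Tile.mjtile ∧ 1 ≤ b ∧ b < c ∧ D r b = Tile.rtile ∧
    ∀ j, b < j → j < c → D r j ≠ Tile.rtile)

/-- Case C (crossing) for an F-target with window-left column `b`. -/
def FCaseC (D : Grid) (r c b : ℕ) : Prop :=
  D r c = Tile.mjtile ∧ PipeSegment D (r+1) b c

/-- Case C̸ (noncrossing) for an F-target with window-left column `b`. -/
def FCaseCbar (D : Grid) (r c b : ℕ) : Prop :=
  D r c = Tile.mjtile ∧ ¬ PipeSegment D (r+1) b c

/-- Case T (terminal) for an F-target. -/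
def FCaseT (n : ℕ) (D : Grid) (r c c' : ℕ) : Prop := IsfStarTarget n D r c c'

/-- Case D (doublecross) for an F-target. -/
def FCaseD (n : ℕ) (D : Grid) (r c c' : ℕ) : Prop :=
  IsfTarget n D r c c' ∧ ∃ d, c < d ∧ d < c' ∧ Doublecross D r d c'

/-- Case O (ordinary) for an F-target. -/
def FCaseO (n : ℕ) (D : Grid) (r c c' : ℕ) : Prop :=
  IsfTarget n D r c c' ∧ ¬ ∃ d, c < d ∧ d < c' ∧ Doublecross D r d c'

/-- `ρ` is the right droop column of the F-target `(r,c)` with associated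
column `c'`: `ρ = c'` in Cases T and O, and `ρ = d` in Case D. -/
def FRightDroop (n : ℕ) (D : Grid) (r c c' ρ : ℕ) : Prop :=
  ((FCaseT n D r c c' ∨ FCaseO n D r c c') ∧ ρ = c') ∨
  (IsfTarget n D r c c' ∧ c < ρ ∧ ρ < c' ∧ Doublecross D r ρ c')

/-- The F-move at the F-target `(r,c)` with window-left column `b`,
associated column `c'` and right droop column `ρ`: remove the mark at
`(r,c)` if marked; in Cases B and C (i.e. when `D_{r+1,[b,c]}` is a pipe
segment) perform the `(r,[c,ρ])`-undroop; then mark `(r+1,c')` if it is a J. -/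
def Fmove (D : Grid) (r c b c' ρ : ℕ) : Grid :=
  markIfJ
    (if PipeSegment D (r+1) b c then undroop (unmark D r c) r c ρ else unmark D r c)
    (r+1) c'

/-- `(r+1,c)` is an e-target of `D` with `c'` as in condition (e2)
(conditions (e1), (e2) with `c'` maximal, (e3)). -/
def IseTarget (n : ℕ) (D : Grid) (r c c' : ℕ) : Prop :=
  1 ≤ r ∧ r + 1 ≤ n ∧ 1 ≤ c ∧ c ≤ n ∧
  (D (r+1) c).Heavy ∧ (∀ j, 1 ≤ j → j < c → ¬ (D (r+1) j).Heavy) ∧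
  1 ≤ c' ∧ c' < c ∧ D r c' = Tile.rtile ∧ ¬ PipeSegment D (r+1) c' c ∧
  (∀ j, c' < j → j < c → D r j = Tile.rtile → PipeSegment D (r+1) j c) ∧
  (∀ j, c' < j → j ≤ n → ¬ (D r j).Heavy)

/-- `(r+1,c)` is an e*-target of `D` with `c'` as in condition (e2)
(conditions (e*1), (e2) with `c'` maximal, (e3)). -/
def IseStarTarget (n : ℕ) (D : Grid) (r c c' : ℕ) : Prop :=
  1 ≤ r ∧ r + 1 ≤ n ∧ 1 ≤ c ∧ c ≤ n ∧
  (∀ j, 1 ≤ j → j ≤ n → ¬ (D (r+1) j).Heavy) ∧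
  (D r c = Tile.rtile ∨ D (r+1) c = Tile.rtile) ∧
  (∀ j, c < j → j ≤ n → D r j ≠ Tile.rtile ∧ D (r+1) j ≠ Tile.rtile) ∧
  1 ≤ c' ∧ c' < c ∧ D r c' = Tile.rtile ∧ ¬ PipeSegment D (r+1) c' c ∧
  (∀ j, c' < j → j < c → D r j = Tile.rtile → PipeSegment D (r+1) j c) ∧
  (∀ j, c' < j → j ≤ n → ¬ (D r j).Heavy)

/-- An E-target is an e-target or an e*-target. -/
def IsETarget (n : ℕ) (D : Grid) (r c c' : ℕ) : Prop :=
  IseTarget n D r c c' ∨ IseStarTarget n D r c c'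

/-- Case L (left turn) for an E-target `(r+1,c)` with window-left `c'`. -/
def ECaseL (D : Grid) (r c c' : ℕ) : Prop := ¬ PipeSegment D r c' c

/-- Case D (doublecross) for an E-target. -/
def ECaseD (D : Grid) (r c c' : ℕ) : Prop :=
  PipeSegment D r c' c ∧ ∃ d, Doublecross D r c' d

/-- Case S (straight) for an E-target. -/
def ECaseS (D : Grid) (r c c' : ℕ) : Prop :=
  PipeSegment D r c' c ∧ ¬ ∃ d, Doublecross D r c' d

/-- Case I (initial) for an E-target. -/
def ECaseI (n : ℕ) (D : Grid) (r c c' : ℕ) : Prop := IseStarTarget n D r c c'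

/-- Case P (plus) for an E-target. -/
def ECaseP (n : ℕ) (D : Grid) (r c c' : ℕ) : Prop :=
  IseTarget n D r c c' ∧ D r c = Tile.plus

/-- Case P̸ (no plus) for an E-target. -/
def ECasePbar (n : ℕ) (D : Grid) (r c c' : ℕ) : Prop :=
  IseTarget n D r c c' ∧ D r c ≠ Tile.plus

/-- `lam` is the left droop column of the E-target `(r+1,c)` with
window-left `c'`. -/
def ELeftDroop (D : Grid) (r c c' lam : ℕ) : Prop :=
  (ECaseS D r c c' ∧ lam = c') ∨
  (ECaseD D r c c' ∧ c' < lam ∧ D (r+1) lam = Tile.jtile ∧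
    ∀ j, c' < j → j < lam → D (r+1) j ≠ Tile.jtile) ∨
  (ECaseL D r c c' ∧ c' < lam ∧ D r lam = Tile.jtile ∧
    ∀ j, c' < j → j < lam → D r j ≠ Tile.jtile)

/-- `ρ` is the right droop column of the E-target `(r+1,c)` with
window-left `c'`. -/
def ERightDroop (n : ℕ) (D : Grid) (r c c' ρ : ℕ) : Prop :=
  ((ECaseI n D r c c' ∨ ECasePbar n D r c c') ∧ ρ = c) ∨
  (ECaseP n D r c c' ∧ ρ < c ∧ D (r+1) ρ = Tile.rtile ∧
    ∀ j, ρ < j → j < c → D (r+1) j ≠ Tile.rtile)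

/-- The E-move at the E-target `(r+1,c)` with window-left column `c'`,
left droop column `lam` and right droop column `ρ`: remove the mark at
`(r+1,c)` if marked; in Cases S and D (i.e. when `D_{r,[c',c]}` is a pipe
segment) perform the `(r,[lam,ρ])`-droop; then mark `(r,lam)` if it is a J. -/
def Emove (D : Grid) (r c c' lam ρ : ℕ) : Grid :=
  markIfJ
    (if PipeSegment D r c' c then droop (unmark D (r+1) c) r lam ρ
     else unmark D (r+1) c)
    r lam

/-- Demazure (0-Hecke) product `s_a * w` (left multiplication by a simple
reflection): it is `s_a w` when `ℓ(s_a w) = ℓ(w) + 1`, i.e. when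
`w⁻¹ a < w⁻¹ (a+1)`, and `w` otherwise. -/
def dmul (a : ℕ) (w : Equiv.Perm ℕ) : Equiv.Perm ℕ :=
  if w⁻¹ a < w⁻¹ (a+1) then Equiv.swap a (a+1) * w else w

/-- Demazure (0-Hecke) product `w * s_a` (right multiplication by a simple
reflection): it is `w s_a` when `ℓ(w s_a) = ℓ(w) + 1`, i.e. when
`w a < w (a+1)`, and `w` otherwise. -/
def rdmul (w : Equiv.Perm ℕ) (a : ℕ) : Equiv.Perm ℕ :=
  if w a < w (a+1) then w * Equiv.swap a (a+1) else w

/-- The permutation `w(B) = s_{a_ℓ} * ⋯ * s_{a_1}` (Demazure product)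
associated to a sequence of biletters `B = ((i_1,a_1), …, (i_ℓ,a_ℓ))`. -/
def cpPerm (B : List (ℕ × ℕ)) : Equiv.Perm ℕ :=
  B.foldl (fun w p => dmul p.2 w) 1

/-- Coxeter length (inversion count on `{1,…,n}`) of a permutation
supported on `{1,…,n}`. -/
def lenPerm (n : ℕ) (w : Equiv.Perm ℕ) : ℕ :=
  (((Finset.Icc 1 n) ×ˢ (Finset.Icc 1 n)).filter
    (fun p => p.1 < p.2 ∧ w p.2 < w p.1)).card

/-- The list of states `(row, column, entered-from-East?)` visited by the pipe
of an MBPD beginning at the given state (with fuel). In an MBPD, every pipe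
moves only left and down. -/
def visitsFuel (n : ℕ) (D : Grid) : ℕ → ℕ → ℕ → Bool → List (ℕ × ℕ × Bool)
  | 0, _, _, _ => []
  | fuel+1, r, c, true =>
    (r, c, true) ::
      (match D r c with
       | Tile.horiz | Tile.plus => if 1 < c then visitsFuel n D fuel r (c-1) true else []
       | Tile.rtile => if r < n then visitsFuel n D fuel (r+1) c false else []
       | _ => [])
  | fuel+1, r, c, false =>
    (r, c, false) ::
      (match D r c with
       | Tile.vert | Tile.plus => if r < n then visitsFuel n D fuel (r+1) c false else []
       | Tile.jtile | Tile.mjtile => if 1 < c then visitsFuel n D fuel r (c-1) true else []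
       | _ => [])

/-- The pipe entering the right boundary of the MBPD at row `i` passes
through the tile `(r,c)`, entering it from the East (`e = true`) or from the
North (`e = false`). -/
def Visits (n : ℕ) (D : Grid) (i r c : ℕ) (e : Bool) : Prop :=
  (r, c, e) ∈ visitsFuel n D (2*n+2) i n true

/-- Pipes `i` and `j` of the MBPD cross at the plus tile `(r,c)`. -/
def CrossAt (n : ℕ) (D : Grid) (i j r c : ℕ) : Prop :=
  D r c = Tile.plus ∧
    ((Visits n D i r c true ∧ Visits n D j r c false) ∨
     (Visits n D i r c false ∧ Visits n D j r c true))

/-- Pipes `i` and `j` of the MBPD cross (at least once). -/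
def Crosses (n : ℕ) (D : Grid) (i j : ℕ) : Prop := ∃ r c, CrossAt n D i j r c

open Classical in
/-- The permutation associated to an MBPD: the pipe entering the right
boundary at row `i` exits the bottom boundary at column `w(i)`, where
crossings of a pair of pipes after their first crossing are ignored.
Equivalently, it is the unique permutation of `{1,…,n}` whose inversions are
exactly the pairs of pipes that cross at least once. -/
noncomputable def permOf (n : ℕ) (D : Grid) : Equiv.Perm ℕ :=
  if h : ∃ w : Equiv.Perm ℕ,
      (∀ k, (k < 1 ∨ n < k) → w k = k) ∧
      (∀ i j, 1 ≤ i → i < j → j ≤ n → (w j < w i ↔ Crosses n D i j))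
  then h.choose else 1

/-- An unmarked, reduced MBPD: no marked J tile, and no two pipes cross more
than once. -/
def ReducedMBPD (n : ℕ) (D : Grid) : Prop :=
  (∀ i j, D i j ≠ Tile.mjtile) ∧
  (∀ i j, 1 ≤ i → i < j → j ≤ n →
    ∀ r c r' c', CrossAt n D i j r c → CrossAt n D i j r' c' → r = r' ∧ c = c')

/-- A biletter: a pair `(i,a)` with `1 ≤ i ≤ a < n`. -/
def IsBiletter (n : ℕ) (p : ℕ × ℕ) : Prop := 1 ≤ p.1 ∧ p.1 ≤ p.2 ∧ p.2 < n

/-- The order on biletters: `p > q` iff `p.1 > q.1`, or `p.1 = q.1` and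
`p.2 < q.2`. -/
def BiletterGT (p q : ℕ × ℕ) : Prop := q.1 < p.1 ∨ (q.1 = p.1 ∧ p.2 < q.2)

/-- A reverse compatible pair: a strictly decreasing sequence of biletters. -/
def IsRCP (n : ℕ) (B : List (ℕ × ℕ)) : Prop :=
  (∀ p ∈ B, IsBiletter n p) ∧ B.Chain' BiletterGT

/-- The weight of a sequence of biletters: coordinate `i` counts the
biletters with first entry `i`. -/
def cpWeight (B : List (ℕ × ℕ)) (i : ℕ) : ℕ := B.countP (fun p => decide (p.1 = i))

/-- The weight of an MBPD: coordinate `i` counts the heavy tiles in row `i`. -/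
def rowWeight (n : ℕ) (D : Grid) (i : ℕ) : ℕ :=
  ((Finset.Icc 1 n).filter (fun j => (D i j).Heavy)).card

/-- The tiles of a (not necessarily reduced) pipedream: plus, bump, and the
J tile used on the antidiagonal boundary. -/
inductive PDTile
  | pplus | bump | pj
  deriving DecidableEq

/-- A pipedream of size `n`: a tiling of the staircase
`{(i,j) : i + j ≤ n + 1}` with J tiles exactly on the antidiagonal
`i + j = n + 1` and plus or bump tiles elsewhere (normalized to `bump`
outside the staircase). -/
def IsPD (n : ℕ) (P : ℕ → ℕ → PDTile) : Prop :=
  (∀ i j, 1 ≤ i → 1 ≤ j → i + j = n + 1 → P i j = PDTile.pj) ∧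
  (∀ i j, 1 ≤ i → 1 ≤ j → i + j ≤ n → (P i j = PDTile.pplus ∨ P i j = PDTile.bump)) ∧
  (∀ i j, ¬ (1 ≤ i ∧ 1 ≤ j ∧ i + j ≤ n + 1) → P i j = PDTile.bump)

/-- The tiling of the staircase with plus tiles exactly at the positions
`(i_k, a_k - i_k + 1)` for the biletters `(i_k, a_k)` of `B`, bump tiles at
all other interior positions, and J tiles on the antidiagonal. -/
def rcpToPD (n : ℕ) (B : List (ℕ × ℕ)) : ℕ → ℕ → PDTile := fun i j =>
  if 1 ≤ i ∧ 1 ≤ j ∧ i + j ≤ n + 1 then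
    if i + j = n + 1 then PDTile.pj
    else if (i, i + j - 1) ∈ B then PDTile.pplus else PDTile.bump
  else PDTile.bump

/-- The list of states `(row, column, entered-from-West?)` visited by a pipe
of a pipedream beginning at the given state (with fuel). In a pipedream,
every pipe moves only right and up. -/
def pdVisitsFuel (n : ℕ) (P : ℕ → ℕ → PDTile) : ℕ → ℕ → ℕ → Bool → List (ℕ × ℕ × Bool)
  | 0, _, _, _ => []
  | fuel+1, r, c, true =>
    (r, c, true) ::
      (match P r c with
       | PDTile.pplus => if c < n then pdVisitsFuel n P fuel r (c+1) true else []
       | PDTile.bump | PDTile.pj =>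
           if 1 < r then pdVisitsFuel n P fuel (r-1) c false else [])
  | fuel+1, r, c, false =>
    (r, c, false) ::
      (match P r c with
       | PDTile.pplus => if 1 < r then pdVisitsFuel n P fuel (r-1) c false else []
       | PDTile.bump => if c < n then pdVisitsFuel n P fuel r (c+1) true else []
       | PDTile.pj => [])

/-- The pipe entering the left boundary of the pipedream at row `i` passes
through the tile `(r,c)`, entering it from the West (`e = true`) or from the
South (`e = false`). -/
def PDVisits (n : ℕ) (P : ℕ → ℕ → PDTile) (i r c : ℕ) (e : Bool) : Prop :=
  (r, c, e) ∈ pdVisitsFuel n P (2*n+2) i 1 true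

/-- Pipes `i` and `j` of a pipedream cross (at least once). -/
def PDCrosses (n : ℕ) (P : ℕ → ℕ → PDTile) (i j : ℕ) : Prop :=
  ∃ r c, P r c = PDTile.pplus ∧
    ((PDVisits n P i r c true ∧ PDVisits n P j r c false) ∨
     (PDVisits n P i r c false ∧ PDVisits n P j r c true))

open Classical in
/-- The permutation associated to a pipedream: the pipe entering the left
boundary at row `i` exits the top boundary at column `w(i)`, where crossings
of a pair of pipes after their first crossing are ignored. Equivalently, it
is the unique permutation of `{1,…,n}` whose inversions are exactly the pairs
of pipes that cross at least once. -/
noncomputable def pdPermOf (n : ℕ) (P : ℕ → ℕ → PDTile) : Equiv.Perm ℕ :=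
  if h : ∃ w : Equiv.Perm ℕ,
      (∀ k, (k < 1 ∨ n < k) → w k = k) ∧
      (∀ i j, 1 ≤ i → i < j → j ≤ n → (w j < w i ↔ PDCrosses n P i j))
  then h.choose else 1

/-- The weight of a pipedream: coordinate `i` counts the plus tiles in row `i`. -/
def pdWeight (n : ℕ) (P : ℕ → ℕ → PDTile) (i : ℕ) : ℕ :=
  ((Finset.Icc 1 n).filter (fun j => P i j = PDTile.pplus)).card

/-! ### Auxiliary lemmas for statement 12 -/

lemma light_cases {t : Tile} (h : ¬ t.Heavy) :
    t = .horiz ∨ t = .vert ∨ t = .plus ∨ t = .rtile ∨ t = .jtile := by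
  cases t <;> simp [Tile.Heavy] at h ⊢

/-- Alternating RJ word starting with J (or empty). -/
def AltJ (w : List Tile) : Prop := w = [] ∨ TypeJ w ∨ TypeJR w

/-- Alternating RJ word starting with R (or empty). -/
def AltR (w : List Tile) : Prop := Paired w ∨ TypeR w

lemma AltJ_cons {w : List Tile} (h : AltR w) : AltJ (Tile.jtile :: w) := by
  rcases h with h | ⟨w', hw', rfl⟩
  · exact Or.inr (Or.inl ⟨w, h, rfl⟩)
  · exact Or.inr (Or.inr ⟨w', hw', rfl⟩)

lemma AltR_cons {w : List Tile} (h : AltJ w) : AltR (Tile.rtile :: w) := by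
  rcases h with rfl | ⟨w', hw', rfl⟩ | ⟨w', hw', rfl⟩
  · exact Or.inr ⟨[], Paired.nil, rfl⟩
  · exact Or.inl (Paired.cons hw')
  · exact Or.inr ⟨Tile.rtile :: Tile.jtile :: w', Paired.cons hw', rfl⟩

lemma Paired_head {w : List Tile} (h : Paired w) :
    w = [] ∨ ∃ v, w = Tile.rtile :: v := by
  cases h with
  | nil => exact Or.inl rfl
  | cons h => exact Or.inr ⟨_, rfl⟩

lemma AltR_head {w : List Tile} (h : AltR w) :
    w = [] ∨ ∃ v, w = Tile.rtile :: v := by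
  rcases h with h | ⟨w', hw', rfl⟩
  · exact Paired_head h
  · rcases Paired_head hw' with rfl | ⟨v, rfl⟩
    · exact Or.inr ⟨[], rfl⟩
    · exact Or.inr ⟨_, rfl⟩

lemma AltR_not_typeJ {w : List Tile} (h : AltR w)
    (h2 : TypeJ w ∨ TypeJR w) : False := by
  have hj : ∃ v, w = Tile.jtile :: v := by
    rcases h2 with ⟨w', _, rfl⟩ | ⟨w', _, rfl⟩
    · exact ⟨w', rfl⟩
    · exact ⟨_, rfl⟩
  obtain ⟨v, rfl⟩ := hj
  rcases AltR_head h with h' | ⟨v', hv⟩ <;> simp_all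

lemma AltJ_nonempty {w : List Tile} (h : AltJ w) (hne : w ≠ []) :
    TypeJ w ∨ TypeJR w := by
  rcases h with rfl | h
  · exact absurd rfl hne
  · exact h

lemma rjWord_nil (D : Grid) (i a b : ℕ) (h : b ≤ a) : rjWord D i a b = [] := by
  rw [rjWord, List.Ico.eq_nil_of_le h]
  rfl

lemma rjWord_cons_rj (D : Grid) (i a b : ℕ) (h : a < b)
    (h2 : D i a = Tile.rtile ∨ D i a = Tile.jtile) :
    rjWord D i a b = D i a :: rjWord D i (a+1) b := by
  rw [rjWord, List.Ico.eq_cons h, List.map_cons, List.filter_cons, rjWord]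
  simp [h2]

lemma rjWord_cons_not (D : Grid) (i a b : ℕ) (h : a < b)
    (h2 : ¬ (D i a = Tile.rtile ∨ D i a = Tile.jtile)) :
    rjWord D i a b = rjWord D i (a+1) b := by
  rw [rjWord, List.Ico.eq_cons h, List.map_cons, List.filter_cons, rjWord]
  simp [h2]

lemma mem_rjWord (D : Grid) (i a b d : ℕ) (h1 : a ≤ d) (h2 : d < b)
    (h3 : D i d = Tile.rtile ∨ D i d = Tile.jtile) :
    D i d ∈ rjWord D i a b := by
  rw [rjWord]
  refine List.mem_filter.mpr ⟨List.mem_map.mpr ⟨d, List.Ico.mem.mpr ⟨h1, h2⟩, rfl⟩, ?_⟩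
  simpa using h3

/-- Main alternation lemma: in a run of light tiles with matching adjacent
edges, the RJ word alternates, starting with J if the state entering from
the left is `true`, with R if it is `false`. -/
lemma altLemma (D : Grid) (i b : ℕ) :
    ∀ k a, b ≤ a + k →
    (∀ j, a < j → j < b → ¬ (D i j).Heavy) →
    (∀ j, a ≤ j → j + 1 < b → (D i j).right = (D i (j+1)).left) →
    ((D i a).right = true → AltJ (rjWord D i (a+1) b)) ∧
    ((D i a).right = false → AltR (rjWord D i (a+1) b)) := by
  intro k
  induction k with
  | zero =>
      intro a hb _ _
      rw [rjWord_nil D i (a+1) b (by omega)]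
      exact ⟨fun _ => Or.inl rfl, fun _ => Or.inl Paired.nil⟩
  | succ k ih =>
      intro a hb hlight hadj
      by_cases hab : a + 1 < b
      · have h1 := ih (a+1) (by omega) (fun j hj1 hj2 => hlight j (by omega) hj2)
          (fun j hj1 hj2 => hadj j (by omega) hj2)
        have hl : (D i (a+1)).left = (D i a).right := (hadj a le_rfl hab).symm
        have hlt := light_cases (hlight (a+1) (by omega) hab)
        constructor
        · intro hs
          rw [hs] at hl
          rcases hlt with h | h | h | h | h
          · rw [rjWord_cons_not D i (a+1) b hab (by rw [h]; simp)]
            exact h1.1 (by rw [h]; rfl)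
          · rw [h] at hl; simp [Tile.left] at hl
          · rw [rjWord_cons_not D i (a+1) b hab (by rw [h]; simp)]
            exact h1.1 (by rw [h]; rfl)
          · rw [h] at hl; simp [Tile.left] at hl
          · rw [rjWord_cons_rj D i (a+1) b hab (Or.inr h), h]
            exact AltJ_cons (h1.2 (by rw [h]; rfl))
        · intro hs
          rw [hs] at hl
          rcases hlt with h | h | h | h | h
          · rw [h] at hl; simp [Tile.left] at hl
          · rw [rjWord_cons_not D i (a+1) b hab (by rw [h]; simp)]
            exact h1.2 (by rw [h]; rfl)
          · rw [h] at hl; simp [Tile.left] at hl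
          · rw [rjWord_cons_rj D i (a+1) b hab (Or.inl h), h]
            exact AltR_cons (h1.1 (by rw [h]; rfl))
          · rw [h] at hl; simp [Tile.left] at hl
      · rw [rjWord_nil D i (a+1) b (by omega)]
        exact ⟨fun _ => Or.inl rfl, fun _ => Or.inl Paired.nil⟩

/-- The horizontal state propagates through a run of horiz/plus tiles. -/
lemma stateProp (D : Grid) (i a : ℕ) :
    ∀ d, a < d →
    (∀ j, a ≤ j → j + 1 ≤ d → (D i j).right = (D i (j+1)).left) →
    (∀ j, a < j → j < d → D i j = Tile.horiz ∨ D i j = Tile.plus) →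
    (D i d).left = (D i a).right := by
  intro d
  induction d with
  | zero => omega
  | succ e ihe =>
      intro had hadj hmid
      rcases Nat.lt_or_ge a e with he | he
      · have h1 : (D i (e+1)).left = (D i e).right := (hadj e (by omega) le_rfl).symm
        have h2 := hmid e (by omega) (by omega)
        have h3 := ihe he (fun j hj1 hj2 => hadj j hj1 (by omega))
          (fun j hj1 hj2 => hmid j hj1 (by omega))
        have h4 : (D i e).right = (D i e).left := by
          rcases h2 with h | h <;> rw [h] <;> rfl
        rw [h1, h4, h3]
      · have he : e = a := by omega
        rw [he]
        exact (hadj a le_rfl (by omega)).symm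

/-- Location of the first non-horizontal/plus tile in a light run. -/
lemma firstBad (D : Grid) (i a b : ℕ)
    (hadj : ∀ j, a ≤ j → j + 1 < b → (D i j).right = (D i (j+1)).left)
    (hnps : ¬ PipeSegment D i a b) :
    ∃ d, a < d ∧ d < b ∧
      (∀ j, a < j → j < d → D i j = Tile.horiz ∨ D i j = Tile.plus) ∧
      ¬ (D i d = Tile.horiz ∨ D i d = Tile.plus) ∧
      (D i d).left = (D i a).right := by
  have hex : ∃ d, a < d ∧ d < b ∧ ¬ (D i d = Tile.horiz ∨ D i d = Tile.plus) := by
    by_contra h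
    push_neg at h
    exact hnps fun j hj1 hj2 => h j hj2 hj1
  classical
  obtain ⟨hd1, hd2, hd3⟩ := Nat.find_spec hex
  set d := Nat.find hex with hdd
  have hmin : ∀ j, a < j → j < d → D i j = Tile.horiz ∨ D i j = Tile.plus := by
    intro j hj1 hj2
    have := Nat.find_min hex hj2
    push_neg at this
    exact this hj1 (by omega)
  refine ⟨d, hd1, hd2, hmin, hd3, ?_⟩
  exact stateProp D i a d hd1 (fun j hj1 hj2 => hadj j hj1 (by omega)) hmin

/-- for an E-target `(r+1,c)` with window `[r,r+1] × [c',c]`: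
(1) in Case L the RJ subsequence of `D_{r,[c'+1,c-1]}` is of type J or JR;
(2) outside Case L, Case D holds iff the RJ subsequence of
`D_{r+1,[c'+1,c-1]}` is of type J or JR, and in Case D,
`D_{[r,r+1],[c',λ]}` is a doublecross for the left droop column `λ`. -/
theorem statement12 (n : ℕ) (D : Grid) (r c c' : ℕ) (hD : IsMBPD n D)
    (hT : IsETarget n D r c c') :
    (ECaseL D r c c' →
      TypeJ (rjWord D r (c'+1) c) ∨ TypeJR (rjWord D r (c'+1) c)) ∧
    (¬ ECaseL D r c c' →
      (ECaseD D r c c' ↔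
        (TypeJ (rjWord D (r+1) (c'+1) c) ∨ TypeJR (rjWord D (r+1) (c'+1) c))) ∧
      (∀ lam, ECaseD D r c c' → ELeftDroop D r c c' lam →
        Doublecross D r c' lam)) := by
  obtain ⟨h1r, hrn, h1c, hcn, hc'1, hc'c, hrt, hnps, hlightR, hlightR1⟩ :
      1 ≤ r ∧ r + 1 ≤ n ∧ 1 ≤ c ∧ c ≤ n ∧ 1 ≤ c' ∧ c' < c ∧
      D r c' = Tile.rtile ∧ ¬ PipeSegment D (r+1) c' c ∧
      (∀ j, c' < j → j ≤ n → ¬ (D r j).Heavy) ∧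
      (∀ j, c' < j → j < c → ¬ (D (r+1) j).Heavy) := by
    rcases hT with ⟨a1,a2,a3,a4,a5,a6,a7,a8,a9,a10,a11,a12⟩ |
      ⟨a1,a2,a3,a4,a5,a6,a7,a8,a9,a10,a11,a12,a13⟩
    · exact ⟨a1,a2,a3,a4,a7,a8,a9,a10,a12, fun j hj1 hj2 => a6 j (by omega) hj2⟩
    · exact ⟨a1,a2,a3,a4,a8,a9,a10,a11,a13, fun j hj1 hj2 => a5 j (by omega) (by omega)⟩
  have hadjR : ∀ j, c' ≤ j → j + 1 < c → (D r j).right = (D r (j+1)).left :=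
    fun j hj1 hj2 => hD.1 r j h1r (by omega) (by omega) (by omega)
  have hadjR1 : ∀ j, c' ≤ j → j + 1 < c → (D (r+1) j).right = (D (r+1) (j+1)).left :=
    fun j hj1 hj2 => hD.1 (r+1) j (by omega) hrn (by omega) (by omega)
  have hlightRc : ∀ j, c' < j → j < c → ¬ (D r j).Heavy :=
    fun j hj1 hj2 => hlightR j hj1 (by omega)
  constructor
  · -- Part 1: Case L
    intro hL
    obtain ⟨d, hd1, hd2, hdps, hdbad, hdleft⟩ := firstBad D r c' c hadjR hL
    have hdl : D r d = Tile.jtile := by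
      rw [hrt] at hdleft
      rcases light_cases (hlightRc d hd1 hd2) with h | h | h | h | h
      · exact absurd (Or.inl h) hdbad
      · rw [h] at hdleft; simp [Tile.left, Tile.right] at hdleft
      · exact absurd (Or.inr h) hdbad
      · rw [h] at hdleft; simp [Tile.left, Tile.right] at hdleft
      · exact h
    have hne : rjWord D r (c'+1) c ≠ [] := by
      have := mem_rjWord D r (c'+1) c d (by omega) hd2 (Or.inr hdl)
      exact List.ne_nil_of_mem this
    exact AltJ_nonempty
      ((altLemma D r c c c' (by omega) hlightRc hadjR).1 (by rw [hrt]; rfl)) hne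
  · -- Part 2
    intro hnL
    have hps : PipeSegment D r c' c := not_not.mp hnL
    have key : (D (r+1) c').right = true →
        ECaseD D r c c' ∧
        (TypeJ (rjWord D (r+1) (c'+1) c) ∨ TypeJR (rjWord D (r+1) (c'+1) c)) ∧
        ∃ d, Doublecross D r c' d ∧ d < c ∧
          (∀ j, c' < j → j < d → D (r+1) j ≠ Tile.jtile) := by
      intro hs
      obtain ⟨d, hd1, hd2, hdps, hdbad, hdleft⟩ := firstBad D (r+1) c' c hadjR1 hnps
      rw [hs] at hdleft
      have hdl : D (r+1) d = Tile.jtile := by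
        rcases light_cases (hlightR1 d hd1 hd2) with h | h | h | h | h
        · exact absurd (Or.inl h) hdbad
        · rw [h] at hdleft; simp [Tile.left] at hdleft
        · exact absurd (Or.inr h) hdbad
        · rw [h] at hdleft; simp [Tile.left] at hdleft
        · exact h
      have hdc : Doublecross D r c' d :=
        ⟨hd1, fun j hj1 hj2 => hps j (by omega) hj2,
          fun j hj1 hj2 => hdps j hj2 hj1, hrt, hdl⟩
      refine ⟨⟨hps, d, hdc⟩, ?_, d, hdc, hd2, ?_⟩
      · have hne : rjWord D (r+1) (c'+1) c ≠ [] := by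
          have := mem_rjWord D (r+1) (c'+1) c d (by omega) hd2 (Or.inr hdl)
          exact List.ne_nil_of_mem this
        exact AltJ_nonempty
          ((altLemma D (r+1) c c c' (by omega) hlightR1 hadjR1).1 hs) hne
      · intro j hj1 hj2 hjj
        rcases hdps j hj1 hj2 with h' | h' <;> rw [hjj] at h' <;> simp at h'
    have keyF : (D (r+1) c').right = false →
        ¬ ECaseD D r c c' ∧
        ¬ (TypeJ (rjWord D (r+1) (c'+1) c) ∨ TypeJR (rjWord D (r+1) (c'+1) c)) := by
      intro hs
      have hcc : c' + 1 < c := by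
        by_contra h
        exact hnps fun j hj1 hj2 => absurd hj1 (by omega)
      have hl1 : (D (r+1) (c'+1)).left = false := by
        rw [← hadjR1 c' le_rfl hcc, hs]
      have ht : D (r+1) (c'+1) = Tile.vert ∨ D (r+1) (c'+1) = Tile.rtile := by
        rcases light_cases (hlightR1 (c'+1) (by omega) hcc) with h | h | h | h | h
        · rw [h] at hl1; simp [Tile.left] at hl1
        · exact Or.inl h
        · rw [h] at hl1; simp [Tile.left] at hl1
        · exact Or.inr h
        · rw [h] at hl1; simp [Tile.left] at hl1
      constructor
      · rintro ⟨-, d, hd1, -, hps1, -, hdj⟩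
        rcases Nat.lt_or_ge (c'+1) d with h | h
        · rcases hps1 (c'+1) h (by omega) with h' | h' <;>
            rcases ht with h'' | h'' <;> rw [h''] at h' <;> simp at h'
        · have hdeq : d = c' + 1 := by omega
          rw [hdeq] at hdj
          rcases ht with h'' | h'' <;> rw [h''] at hdj <;> simp at hdj
      · intro hT2
        exact AltR_not_typeJ
          ((altLemma D (r+1) c c c' (by omega) hlightR1 hadjR1).2 hs) hT2
    constructor
    · cases hs : (D (r+1) c').right with
      | true =>
          have h := key hs
          exact ⟨fun _ => h.2.1, fun _ => h.1⟩
      | false =>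
          have h := keyF hs
          exact ⟨fun h' => absurd h' h.1, fun h' => absurd h' h.2⟩
    · intro lam hED hlam
      have hs : (D (r+1) c').right = true := by
        cases hs : (D (r+1) c').right with
        | true => rfl
        | false => exact absurd hED (keyF hs).1
      obtain ⟨-, -, d, hdc, hd2, hnoj⟩ := key hs
      have hd1 : c' < d := hdc.1
      have hdl : D (r+1) d = Tile.jtile := hdc.2.2.2.2
      rcases hlam with ⟨⟨-, hns⟩, -⟩ | ⟨-, hc'lam, hjlam, hnojlam⟩ | ⟨hL, -⟩
      · exact absurd hED.2 hns
      · have hde : lam = d := by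
          rcases Nat.lt_trichotomy lam d with h | h | h
          · exact absurd hjlam (hnoj lam hc'lam h)
          · exact h
          · exact absurd hdl (hnojlam d hd1 h)
        rw [hde]
        exact hdc
      · exact absurd hps hL

end BPD
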